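/- The maximum of min_{i ≠ b} G_i(α_b, α_i) over feasible allocations α (α_{i,j} ≥ 0, Σ_{i,j} α_{i,j} = 1, with the convention G_i = 0 when some coordinate of α_b or α_i is zero) is attained and is strictly positive, and every maximizer α* satisfies α*_{i,j} > 0 for all 1 ≤ i ≤ K and 1 ≤ j ≤ D. -/

import Mathlib

open Finset Filter Topology

/-!
The feasible allocations form a compact simplex, and each `G_i` is continuous on the nonnegative
orthant: where rows `b` and `i` are positive it is given by a continuous formula, and near a point
with `α_{r,j} = 0` for `r ∈ {b, i}` it is squeezed, `0 ≤ G_i ≤ C α_{r,j}`, because its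
denominator contains `σ_{r,j}² w_j² / α_{r,j}`. Hence `min_{i ≠ b} G_i` attains its maximum. It
is positive at the uniform allocation, whereas a zero coordinate anywhere makes some `G_i` vanish,
so no maximizer has one.
-/

theorem IsCompact.exists_isMaxOn_iInf {X ι α : Type*} [TopologicalSpace X] [Fintype ι]
    [Nonempty ι] [ConditionallyCompleteLinearOrder α] [TopologicalSpace α] [OrderTopology α]
    {s : Set X} (hs : IsCompact s) (hne : s.Nonempty) {f : ι → X → α}
    (hf : ∀ i, ContinuousOn (f i) s) : ∃ x ∈ s, IsMaxOn (fun x ↦ ⨅ i, f i x) s x := by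
  refine hs.exists_isMaxOn hne ?_
  simp_rw [← Finset.inf'_univ_eq_ciInf]
  exact ContinuousOn.finset_inf'_apply _ fun i _ ↦ hf i

def allocations (K D : ℕ) : Set (Fin K → Fin D → ℝ) :=
  Function.uncurry ⁻¹' stdSimplex ℝ (Fin K × Fin D)

theorem mem_allocations {K D : ℕ} {α : Fin K → Fin D → ℝ} :
    α ∈ allocations K D ↔ (∀ i j, 0 ≤ α i j) ∧ ∑ i, ∑ j, α i j = 1 := by
  simp [allocations, stdSimplex, Fintype.sum_prod_type]

theorem allocations_subset_Ici (K D : ℕ) : allocations K D ⊆ Set.Ici 0 :=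
  fun _ hα ↦ (mem_allocations.1 hα).1

theorem isCompact_allocations (K D : ℕ) : IsCompact (allocations K D) :=
  Homeomorph.piCurry.symm.isCompact_preimage.2 (isCompact_stdSimplex ℝ _)

theorem exists_pos_mem_allocations (K D : ℕ) [NeZero K] [NeZero D] :
    ∃ α ∈ allocations K D, ∀ i j, 0 < α i j := by
  have hKD : (0 : ℝ) < K * D := by
    have := NeZero.pos K; have := NeZero.pos D; positivity
  refine ⟨fun _ _ ↦ ((K : ℝ) * D)⁻¹, mem_allocations.2 ⟨fun _ _ ↦ by positivity, ?_⟩,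
    fun _ _ ↦ by positivity⟩
  simp only [sum_const, card_univ, Fintype.card_fin, nsmul_eq_mul, ← mul_assoc]
  exact mul_inv_cancel₀ hKD.ne'

section Rate

variable {K D : ℕ} (b : Fin K) (μbar : Fin K → ℝ) (σ : Fin K → Fin D → ℝ) (w : Fin D → ℝ)

/-- The variance of the estimator `∑ j, w j * X̄ r j` of `μbar r` when component `j` of design `r`
receives the fraction `α r j` of the samples. -/
noncomputable def estimatorVariance (α : Fin K → Fin D → ℝ) (r : Fin K) : ℝ :=
  ∑ j, σ r j ^ 2 * w j ^ 2 / α r j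

/-- `G_i(α_b, α_i)` of the paper. -/
noncomputable def rate (i : Fin K) (α : Fin K → Fin D → ℝ) : ℝ :=
  if (∀ j, 0 < α b j) ∧ ∀ j, 0 < α i j then
    (μbar b - μbar i) ^ 2 / (2 * (estimatorVariance σ w α b + estimatorVariance σ w α i))
  else 0

noncomputable def minRate (α : Fin K → Fin D → ℝ) : ℝ :=
  ⨅ i : {i : Fin K // i ≠ b}, rate b μbar σ w i α

variable {b μbar σ w}

theorem estimatorVariance_nonneg {α : Fin K → Fin D → ℝ} {r : Fin K} (hα : ∀ j, 0 ≤ α r j) :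
    0 ≤ estimatorVariance σ w α r :=
  sum_nonneg fun j _ ↦ div_nonneg (by positivity) (hα j)

theorem div_le_estimatorVariance {α : Fin K → Fin D → ℝ} {r : Fin K} (hα : ∀ j, 0 ≤ α r j)
    (j : Fin D) : σ r j ^ 2 * w j ^ 2 / α r j ≤ estimatorVariance σ w α r :=
  single_le_sum (f := fun j ↦ σ r j ^ 2 * w j ^ 2 / α r j)
    (fun j _ ↦ div_nonneg (by positivity) (hα j)) (mem_univ j)

theorem estimatorVariance_pos [NeZero D] {α : Fin K → Fin D → ℝ} {r : Fin K}
    (hσ : ∀ j, σ r j ≠ 0) (hw : ∀ j, w j ≠ 0) (hα : ∀ j, 0 < α r j) :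
    0 < estimatorVariance σ w α r :=
  sum_pos (fun j _ ↦ by have := hσ j; have := hw j; have := hα j; positivity) univ_nonempty

theorem continuousAt_estimatorVariance {α₀ : Fin K → Fin D → ℝ} {r : Fin K}
    (hα₀ : ∀ j, α₀ r j ≠ 0) : ContinuousAt (fun α ↦ estimatorVariance σ w α r) α₀ :=
  tendsto_finsetSum _ fun j _ ↦
    continuousAt_const.div (continuous_apply_apply r j).continuousAt (hα₀ j)

theorem rate_nonneg (i : Fin K) (α : Fin K → Fin D → ℝ) : 0 ≤ rate b μbar σ w i α := by
  unfold rate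
  split_ifs with h
  · have := estimatorVariance_nonneg (σ := σ) (w := w) fun j ↦ (h.1 j).le
    have := estimatorVariance_nonneg (σ := σ) (w := w) fun j ↦ (h.2 j).le
    positivity
  · rfl

theorem rate_pos [NeZero D] {i : Fin K} {α : Fin K → Fin D → ℝ} (hσ : ∀ r j, σ r j ≠ 0)
    (hw : ∀ j, w j ≠ 0) (hi : μbar i ≠ μbar b) (hb : ∀ j, 0 < α b j) (hi' : ∀ j, 0 < α i j) :
    0 < rate b μbar σ w i α := by
  rw [rate, if_pos ⟨hb, hi'⟩]
  have := sub_ne_zero.2 hi.symm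
  have := estimatorVariance_pos (hσ b) hw hb
  have := estimatorVariance_pos (hσ i) hw hi'
  positivity

theorem rate_eq_zero_of_eq_zero {i r : Fin K} {j : Fin D} {α : Fin K → Fin D → ℝ}
    (hr : r = b ∨ r = i) (hz : α r j = 0) : rate b μbar σ w i α = 0 := by
  refine if_neg fun h ↦ ?_
  rcases hr with rfl | rfl
  exacts [(h.1 j).ne' hz, (h.2 j).ne' hz]

theorem rate_le_mul {i r : Fin K} {j : Fin D} {α : Fin K → Fin D → ℝ} (hσ : σ r j ≠ 0)
    (hw : w j ≠ 0) (hr : r = b ∨ r = i) (hα : 0 ≤ α r j) :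
    rate b μbar σ w i α ≤ (μbar b - μbar i) ^ 2 / (2 * (σ r j ^ 2 * w j ^ 2)) * α r j := by
  unfold rate
  split_ifs with h
  · have hb := estimatorVariance_nonneg (σ := σ) (w := w) fun j ↦ (h.1 j).le
    have hi := estimatorVariance_nonneg (σ := σ) (w := w) fun j ↦ (h.2 j).le
    obtain ⟨hpos, hle⟩ : 0 < α r j ∧
        σ r j ^ 2 * w j ^ 2 / α r j ≤ estimatorVariance σ w α b + estimatorVariance σ w α i := by
      rcases hr with rfl | rfl
      · exact ⟨h.1 j, (div_le_estimatorVariance (fun j ↦ (h.1 j).le) j).trans (by linarith)⟩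
      · exact ⟨h.2 j, (div_le_estimatorVariance (fun j ↦ (h.2 j).le) j).trans (by linarith)⟩
    calc _ ≤ (μbar b - μbar i) ^ 2 / (2 * (σ r j ^ 2 * w j ^ 2 / α r j)) :=
          div_le_div_of_nonneg_left (sq_nonneg _) (by positivity) (by linarith)
      _ = _ := by field_simp
  · positivity

theorem continuousAt_rate [NeZero D] {i : Fin K} {α₀ : Fin K → Fin D → ℝ}
    (hσ : ∀ r j, σ r j ≠ 0) (hw : ∀ j, w j ≠ 0) (hb : ∀ j, 0 < α₀ b j) (hi : ∀ j, 0 < α₀ i j) :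
    ContinuousAt (rate b μbar σ w i) α₀ := by
  have hnear : ∀ᶠ α in 𝓝 α₀, (∀ j, 0 < α b j) ∧ ∀ j, 0 < α i j := by
    have hcoord r j : ContinuousAt (fun α : Fin K → Fin D → ℝ ↦ α r j) α₀ :=
      (continuous_apply_apply r j).continuousAt
    simp only [eventually_and, eventually_all]
    exact ⟨fun j ↦ continuousAt_const.eventually_lt (hcoord b j) (hb j),
      fun j ↦ continuousAt_const.eventually_lt (hcoord i j) (hi j)⟩
  have hVb := estimatorVariance_pos (hσ b) hw hb
  have hVi := estimatorVariance_pos (hσ i) hw hi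
  have hformula : ContinuousAt (fun α ↦ (μbar b - μbar i) ^ 2 /
      (2 * (estimatorVariance σ w α b + estimatorVariance σ w α i))) α₀ :=
    continuousAt_const.div (continuousAt_const.mul
      ((continuousAt_estimatorVariance fun j ↦ (hb j).ne').add
        (continuousAt_estimatorVariance fun j ↦ (hi j).ne'))) (by positivity)
  exact hformula.congr (hnear.mono fun α hα ↦ (if_pos hα).symm)

theorem continuousWithinAt_rate_of_eq_zero {i r : Fin K} {j : Fin D} {α₀ : Fin K → Fin D → ℝ}
    (hσ : σ r j ≠ 0) (hw : w j ≠ 0) (hr : r = b ∨ r = i) (hz : α₀ r j = 0) :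
    ContinuousWithinAt (rate b μbar σ w i) (Set.Ici 0) α₀ := by
  rw [ContinuousWithinAt, rate_eq_zero_of_eq_zero hr hz]
  set C := (μbar b - μbar i) ^ 2 / (2 * (σ r j ^ 2 * w j ^ 2))
  have hlim : Tendsto (fun α : Fin K → Fin D → ℝ ↦ C * α r j) (𝓝[Set.Ici 0] α₀) (𝓝 0) := by
    have := ((continuous_apply_apply r j).const_mul C).tendsto α₀
    rw [hz, mul_zero] at this
    exact this.mono_left nhdsWithin_le_nhds
  refine squeeze_zero' (Eventually.of_forall fun α ↦ rate_nonneg i α) ?_ hlim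
  filter_upwards [self_mem_nhdsWithin] with α hα
  exact rate_le_mul hσ hw hr (hα r j)

theorem continuousOn_rate [NeZero D] (hσ : ∀ r j, σ r j ≠ 0) (hw : ∀ j, w j ≠ 0) (i : Fin K) :
    ContinuousOn (rate b μbar σ w i) (Set.Ici 0) := by
  intro α₀ hα₀
  by_cases h : (∀ j, 0 < α₀ b j) ∧ ∀ j, 0 < α₀ i j
  · exact (continuousAt_rate hσ hw h.1 h.2).continuousWithinAt
  · obtain ⟨r, j, hr, hz⟩ : ∃ r j, (r = b ∨ r = i) ∧ α₀ r j = 0 := by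
      by_contra! hne
      exact h ⟨fun j ↦ (hα₀ b j).lt_of_ne (hne b j (.inl rfl)).symm,
        fun j ↦ (hα₀ i j).lt_of_ne (hne i j (.inr rfl)).symm⟩
    exact continuousWithinAt_rate_of_eq_zero (hσ r j) (hw j) hr hz

theorem minRate_pos [NeZero D] [Nonempty {i : Fin K // i ≠ b}] {α : Fin K → Fin D → ℝ}
    (hσ : ∀ r j, σ r j ≠ 0) (hw : ∀ j, w j ≠ 0) (hμbar : ∀ i, i ≠ b → μbar i ≠ μbar b)
    (hα : ∀ i j, 0 < α i j) : 0 < minRate b μbar σ w α := by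
  obtain ⟨i, hi⟩ :=
    exists_eq_ciInf_of_finite (f := fun i : {i : Fin K // i ≠ b} ↦ rate b μbar σ w i α)
  rw [minRate, ← hi]
  exact rate_pos hσ hw (hμbar i i.2) (hα b) (hα i)

theorem minRate_nonpos_of_eq_zero [Nonempty {i : Fin K // i ≠ b}] {α : Fin K → Fin D → ℝ}
    {r : Fin K} {j : Fin D} (hz : α r j = 0) : minRate b μbar σ w α ≤ 0 := by
  obtain ⟨i, hr⟩ : ∃ i : {i : Fin K // i ≠ b}, r = b ∨ r = i := by
    by_cases h : r = b
    · exact ⟨Classical.arbitrary _, .inl h⟩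
    · exact ⟨⟨r, h⟩, .inr rfl⟩
  exact (ciInf_le (Finite.bddBelow_range _) i).trans (rate_eq_zero_of_eq_zero hr hz).le

theorem eq_rate_of_nonneg {G : Fin K → (Fin K → Fin D → ℝ) → ℝ}
    (hGpos : ∀ i α, (∀ j, 0 < α b j) → (∀ j, 0 < α i j) →
      G i α = (μbar b - μbar i) ^ 2 /
        (2 * (∑ j, (σ b j) ^ 2 * (w j) ^ 2 / α b j + ∑ j, (σ i j) ^ 2 * (w j) ^ 2 / α i j)))
    (hGzero : ∀ i α, (∃ j, α b j = 0 ∨ α i j = 0) → G i α = 0)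
    {α : Fin K → Fin D → ℝ} (hα : ∀ i j, 0 ≤ α i j) (i : Fin K) :
    G i α = rate b μbar σ w i α := by
  unfold rate
  split_ifs with h
  · exact hGpos i α h.1 h.2
  · refine hGzero i α ?_
    by_contra! hne
    exact h ⟨fun j ↦ (hα b j).lt_of_ne (hne j).1.symm, fun j ↦ (hα i j).lt_of_ne (hne j).2.symm⟩

end Rate

theorem stmt_14_general
    {K D : ℕ} (hK : 2 ≤ K) (hD : 1 ≤ D)
    (b : Fin K)
    (σ : Fin K → Fin D → ℝ) (hσ : ∀ i j, 0 < σ i j)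
    (w : Fin D → ℝ) (hw : ∀ j, 0 < w j)
    (μbar : Fin K → ℝ)
    (hbest : ∀ i, i ≠ b → μbar i < μbar b)
    (G : Fin K → (Fin K → Fin D → ℝ) → ℝ)
    (hGpos : ∀ i α, (∀ j, 0 < α b j) → (∀ j, 0 < α i j) →
      G i α = (μbar b - μbar i) ^ 2 /
        (2 * (∑ j, (σ b j) ^ 2 * (w j) ^ 2 / α b j
            + ∑ j, (σ i j) ^ 2 * (w j) ^ 2 / α i j)))
    (hGzero : ∀ i α, (∃ j, α b j = 0 ∨ α i j = 0) → G i α = 0) :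
    (∃ αs : Fin K → Fin D → ℝ,
      (∀ i j, 0 ≤ αs i j) ∧ (∑ i, ∑ j, αs i j = 1) ∧
      (∀ α' : Fin K → Fin D → ℝ, (∀ i j, 0 ≤ α' i j) → ∑ i, ∑ j, α' i j = 1 →
        (⨅ i : {i : Fin K // i ≠ b}, G i.1 α') ≤ ⨅ i : {i : Fin K // i ≠ b}, G i.1 αs) ∧
      0 < ⨅ i : {i : Fin K // i ≠ b}, G i.1 αs)
    ∧
    (∀ αs : Fin K → Fin D → ℝ, (∀ i j, 0 ≤ αs i j) → ∑ i, ∑ j, αs i j = 1 →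
      (∀ α' : Fin K → Fin D → ℝ, (∀ i j, 0 ≤ α' i j) → ∑ i, ∑ j, α' i j = 1 →
        (⨅ i : {i : Fin K // i ≠ b}, G i.1 α') ≤ ⨅ i : {i : Fin K // i ≠ b}, G i.1 αs) →
      ∀ i j, 0 < αs i j) := by
  have : NeZero K := ⟨by omega⟩
  have : NeZero D := ⟨by omega⟩
  have : Nonempty {i : Fin K // i ≠ b} :=
    let ⟨i, hi⟩ := Fintype.exists_ne_of_one_lt_card (by rw [Fintype.card_fin]; omega) b
    ⟨⟨i, hi⟩⟩
  have hσ' i j : σ i j ≠ 0 := (hσ i j).ne'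
  have hw' j : w j ≠ 0 := (hw j).ne'
  have hG : ∀ α, (∀ i j, 0 ≤ α i j) →
      ⨅ i : {i : Fin K // i ≠ b}, G i.1 α = minRate b μbar σ w α :=
    fun α hα ↦ iInf_congr fun i ↦ eq_rate_of_nonneg hGpos hGzero hα i
  obtain ⟨α₀, hα₀, hα₀pos⟩ := exists_pos_mem_allocations K D
  obtain ⟨hα₀₀, hα₀₁⟩ := mem_allocations.1 hα₀
  have hmin₀ := minRate_pos hσ' hw' (fun i hi ↦ (hbest i hi).ne) hα₀pos
  obtain ⟨αs, hαs, hmax⟩ := (isCompact_allocations K D).exists_isMaxOn_iInf ⟨α₀, hα₀⟩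
    fun i : {i : Fin K // i ≠ b} ↦ (continuousOn_rate hσ' hw' i.1).mono (allocations_subset_Ici K D)
  obtain ⟨hαs₀, hαs₁⟩ := mem_allocations.1 hαs
  refine ⟨⟨αs, hαs₀, hαs₁, fun α h₀ h₁ ↦ ?_, ?_⟩, fun α h₀ h₁ hα i j ↦ ?_⟩
  · rw [hG α h₀, hG αs hαs₀]
    exact hmax (mem_allocations.2 ⟨h₀, h₁⟩)
  · rw [hG αs hαs₀]
    exact hmin₀.trans_le (hmax hα₀)
  · have hle := hα α₀ hα₀₀ hα₀₁
    rw [hG α₀ hα₀₀, hG α h₀] at hle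
    exact (h₀ i j).lt_of_ne fun hz ↦ (minRate_nonpos_of_eq_zero hz.symm).not_gt (hmin₀.trans_le hle)

/-- The maximum of `min_{i ≠ b} G_i` over feasible allocations is attained, is strictly
positive, and every maximizer is strictly positive in all coordinates. -/
theorem stmt_14
    {K D : ℕ} (hK : 2 ≤ K) (hD : 1 ≤ D)
    (b : Fin K)
    (μ : Fin K → Fin D → ℝ)
    (σ : Fin K → Fin D → ℝ) (hσ : ∀ i j, 0 < σ i j)
    (w : Fin D → ℝ) (hw : ∀ j, 0 < w j) (hw1 : ∑ j, w j = 1)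
    (μbar : Fin K → ℝ) (hμbar : ∀ i, μbar i = ∑ j, w j * μ i j)
    (hbest : ∀ i, i ≠ b → μbar i < μbar b)
    (G : Fin K → (Fin K → Fin D → ℝ) → ℝ)
    (hGpos : ∀ i α, (∀ j, 0 < α b j) → (∀ j, 0 < α i j) →
      G i α = (μbar b - μbar i) ^ 2 /
        (2 * (∑ j, (σ b j) ^ 2 * (w j) ^ 2 / α b j
            + ∑ j, (σ i j) ^ 2 * (w j) ^ 2 / α i j)))
    (hGzero : ∀ i α, (∃ j, α b j = 0 ∨ α i j = 0) → G i α = 0) :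
    (∃ αs : Fin K → Fin D → ℝ,
      (∀ i j, 0 ≤ αs i j) ∧ (∑ i, ∑ j, αs i j = 1) ∧
      (∀ α' : Fin K → Fin D → ℝ, (∀ i j, 0 ≤ α' i j) → ∑ i, ∑ j, α' i j = 1 →
        (⨅ i : {i : Fin K // i ≠ b}, G i.1 α') ≤ ⨅ i : {i : Fin K // i ≠ b}, G i.1 αs) ∧
      0 < ⨅ i : {i : Fin K // i ≠ b}, G i.1 αs)
    ∧
    (∀ αs : Fin K → Fin D → ℝ, (∀ i j, 0 ≤ αs i j) → ∑ i, ∑ j, αs i j = 1 →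
      (∀ α' : Fin K → Fin D → ℝ, (∀ i j, 0 ≤ α' i j) → ∑ i, ∑ j, α' i j = 1 →
        (⨅ i : {i : Fin K // i ≠ b}, G i.1 α') ≤ ⨅ i : {i : Fin K // i ≠ b}, G i.1 αs) →
      ∀ i j, 0 < αs i j) :=
  stmt_14_general hK hD b σ hσ w hw μbar hbest G hGpos hGzero
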